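/- (Proposition 2.2) Let (X, P(X), ∼) and (Y, P(Y), ≡) be smooth diffeological spaces and f : X → Y a smooth map. Then for each m ≥ 1 the map D^m f : T^m X → T^m Y defined by D^m f([α]_F) := [f ∘ α]_{f(F)} is a smooth map between the tangent smooth diffeological spaces (T^m X, P(T^m X), ≈) and (T^m Y, P(T^m Y), ≈). -/

import Mathlib

/-- An `n`-plaque of a set `X`: a function defined on an open subset of `ℝⁿ`
containing the origin (modelled as a total function together with its domain). -/
structure Plaque (X : Type*) (n : ℕ) where
  dom : Set (Fin n → ℝ)
  isOpen : IsOpen dom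
  zero_mem : (0 : Fin n → ℝ) ∈ dom
  toFun : (Fin n → ℝ) → X

namespace Plaque

variable {X Y : Type*} {n m : ℕ}

/-- Composition of a plaque with a map `ψ` defined on an open set `U'` containing `0`. -/
def comp (p : Plaque X n) (ψ : (Fin m → ℝ) → (Fin n → ℝ)) (U' : Set (Fin m → ℝ))
    (hU' : IsOpen U') (h0 : (0 : Fin m → ℝ) ∈ U') : Plaque X m :=
  ⟨U', hU', h0, fun r => p.toFun (ψ r)⟩

/-- Restriction of a plaque to an open subset of its domain containing `0`. -/
def restrict (p : Plaque X n) (V : Set (Fin n → ℝ)) (hV : IsOpen V)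
    (h0 : (0 : Fin n → ℝ) ∈ V) : Plaque X n :=
  ⟨V, hV, h0, p.toFun⟩

/-- Pushforward of a plaque along a map `f : X → Y`. -/
def map (f : X → Y) (p : Plaque X n) : Plaque Y n :=
  ⟨p.dom, p.isOpen, p.zero_mem, fun r => f (p.toFun r)⟩

end Plaque

/-- A diffeology on a set `X`: a set of `n`-plaques for every `n` such that
(i) the images of the plaques cover `X`; (ii) the smallest common extension of a
family of plaques in `P(X)` is again in `P(X)`; (iii) `P(X)` is stable under
precomposition with smooth maps between open sets. -/
structure Diffeology (X : Type*) where
  plaques : ∀ n : ℕ, Set (Plaque X n)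
  covers : ∀ x : X, ∃ (n : ℕ) (p : Plaque X n), p ∈ plaques n ∧ ∃ r ∈ p.dom, p.toFun r = x
  locality : ∀ {n : ℕ} (s : Set (Plaque X n)) (q : Plaque X n),
    (∀ p ∈ s, p ∈ plaques n) → q.dom = ⋃ p ∈ s, Plaque.dom p →
    (∀ p ∈ s, ∀ r ∈ Plaque.dom p, q.toFun r = p.toFun r) → q ∈ plaques n
  comp_mem : ∀ {n m : ℕ} (p : Plaque X n), p ∈ plaques n →
    ∀ (ψ : (Fin m → ℝ) → (Fin n → ℝ)) (U' : Set (Fin m → ℝ)) (hU' : IsOpen U')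
      (h0 : (0 : Fin m → ℝ) ∈ U'), ContDiffOn ℝ (⊤ : ℕ∞) ψ U' →
      (∀ r ∈ U', ψ r ∈ p.dom) → p.comp ψ U' hU' h0 ∈ plaques m

/-- A smooth diffeological space (SDS): a diffeology together with a family of
equivalence relations `∼ⁿ_F` on the plaques through `F` (for `n ≥ 1`), compatible
with smooth precomposition (fixing `0`) and with restriction. -/
structure SDS (X : Type*) extends Diffeology X where
  rel : ∀ (n : ℕ), X → Plaque X n → Plaque X n → Prop
  mem_of_rel : ∀ {n : ℕ} {F : X} {p₁ p₂ : Plaque X n}, 1 ≤ n → rel n F p₁ p₂ →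
    (p₁ ∈ plaques n ∧ p₁.toFun 0 = F) ∧ (p₂ ∈ plaques n ∧ p₂.toFun 0 = F)
  rel_refl : ∀ {n : ℕ} {F : X} (p : Plaque X n), 1 ≤ n → p ∈ plaques n → p.toFun 0 = F →
    rel n F p p
  rel_symm : ∀ {n : ℕ} {F : X} {p₁ p₂ : Plaque X n}, 1 ≤ n → rel n F p₁ p₂ → rel n F p₂ p₁
  rel_trans : ∀ {n : ℕ} {F : X} {p₁ p₂ p₃ : Plaque X n}, 1 ≤ n →
    rel n F p₁ p₂ → rel n F p₂ p₃ → rel n F p₁ p₃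
  rel_comp : ∀ {n m : ℕ} {F : X} {p₁ p₂ : Plaque X n}, 1 ≤ n → 1 ≤ m → rel n F p₁ p₂ →
    ∀ (ψ : (Fin m → ℝ) → (Fin n → ℝ)) (U' : Set (Fin m → ℝ)) (hU' : IsOpen U')
      (h0 : (0 : Fin m → ℝ) ∈ U'), ContDiffOn ℝ (⊤ : ℕ∞) ψ U' → ψ 0 = 0 →
      (∀ r ∈ U', ψ r ∈ p₁.dom) → (∀ r ∈ U', ψ r ∈ p₂.dom) →
      rel m F (p₁.comp ψ U' hU' h0) (p₂.comp ψ U' hU' h0)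
  rel_restrict : ∀ {n : ℕ} {F : X} (p : Plaque X n), 1 ≤ n → p ∈ plaques n → p.toFun 0 = F →
    ∀ (V : Set (Fin n → ℝ)) (hV : IsOpen V) (h0 : (0 : Fin n → ℝ) ∈ V), V ⊆ p.dom →
    rel n F p (p.restrict V hV h0)

namespace SDS

variable {X : Type*}

/-- The plaques through a point `F`. -/
def PlaqueAt (D : SDS X) (n : ℕ) (F : X) : Type _ :=
  {p : Plaque X n // p ∈ D.plaques n ∧ p.toFun 0 = F}

/-- The `n`-th tangent space at `F`: plaques through `F` modulo `∼ⁿ_F`. -/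
def Tangent (D : SDS X) (n : ℕ) (F : X) : Type _ :=
  Quot (fun p q : D.PlaqueAt n F => D.rel n F p.1 q.1)

/-- The `n`-th tangent bundle: the disjoint union of the tangent spaces. -/
def TangentBundle (D : SDS X) (n : ℕ) : Type _ := Σ F : X, D.Tangent n F

/-- Class of a plaque through `F` as a point of the tangent bundle. -/
def mkTangent (D : SDS X) {n : ℕ} {F : X} (p : Plaque X n) (hp : p ∈ D.plaques n)
    (h0 : p.toFun 0 = F) : D.TangentBundle n :=
  ⟨F, Quot.mk _ (⟨p, hp, h0⟩ : D.PlaqueAt n F)⟩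

end SDS

/-- A map between smooth diffeological spaces is smooth if it is differentiable
(maps plaques to plaques) and preserves the equivalence relations. -/
def IsSmooth {X Y : Type*} (DX : SDS X) (DY : SDS Y) (f : X → Y) : Prop :=
  (∀ (n : ℕ) (p : Plaque X n), p ∈ DX.plaques n → p.map f ∈ DY.plaques n) ∧
  (∀ (n : ℕ), 1 ≤ n → ∀ (F : X) (p₁ p₂ : Plaque X n), DX.rel n F p₁ p₂ →
    DY.rel n (f F) (p₁.map f) (p₂.map f))

/-- The set of plaques generated by a set `S` of plaques: those `p` that locally
factor as `f ∘ φ` with `f ∈ S` and `φ` smooth. -/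
def generatedPlaques {X : Type*} (S : ∀ n : ℕ, Set (Plaque X n)) : ∀ n : ℕ, Set (Plaque X n) :=
  fun n => {p | ∀ r ∈ p.dom, ∃ Ur : Set (Fin n → ℝ), IsOpen Ur ∧ r ∈ Ur ∧ Ur ⊆ p.dom ∧
    ∃ (k : ℕ) (f : Plaque X k), f ∈ S k ∧ ∃ φ : (Fin n → ℝ) → (Fin k → ℝ),
      ContDiffOn ℝ (⊤ : ℕ∞) φ Ur ∧ (∀ s ∈ Ur, φ s ∈ f.dom) ∧
      ∀ s ∈ Ur, p.toFun s = f.toFun (φ s)}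

lemma contDiff_append_right {n m : ℕ} (r : Fin n → ℝ) :
    ContDiff ℝ (⊤ : ℕ∞) (fun s : Fin m → ℝ => Fin.append r s) := by
  apply contDiff_pi.mpr
  intro i
  refine Fin.addCases (motive := fun i => ContDiff ℝ (⊤ : ℕ∞)
      fun s : Fin m → ℝ => Fin.append r s i) ?_ ?_ i
  · intro j
    simp only [Fin.append_left]
    exact contDiff_const
  · intro j
    simp only [Fin.append_right]
    exact contDiff_pi.mp contDiff_id j

/-- The slice `s ↦ p(r, s)` of an `(n+m)`-plaque at a parameter `r`. -/
def Plaque.slice {X : Type*} {n m : ℕ} (p : Plaque X (n + m)) (r : Fin n → ℝ)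
    (hr : Fin.append r (0 : Fin m → ℝ) ∈ p.dom) : Plaque X m where
  dom := (fun s : Fin m → ℝ => Fin.append r s) ⁻¹' p.dom
  isOpen := p.isOpen.preimage (contDiff_append_right r).continuous
  zero_mem := hr
  toFun := fun s => p.toFun (Fin.append r s)

/-- The plaque `p̃(r) = [s ↦ p(r,s)]` on the tangent bundle induced by an
`(n+m)`-plaque `p`. -/
def InducedBy {X : Type*} (D : SDS X) {m n : ℕ} (p : Plaque X (n + m))
    (q : Plaque (D.TangentBundle m) n) : Prop :=
  q.dom = {r : Fin n → ℝ | Fin.append r (0 : Fin m → ℝ) ∈ p.dom} ∧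
  ∀ r ∈ q.dom, ∃ (hr : Fin.append r (0 : Fin m → ℝ) ∈ p.dom)
    (hmem : p.slice r hr ∈ D.plaques m),
    q.toFun r = D.mkTangent (p.slice r hr) hmem rfl

/-- The generating plaques of the tangent diffeology on `T^m X`. -/
def tangentGen {X : Type*} (D : SDS X) (m : ℕ) : ∀ n : ℕ, Set (Plaque (D.TangentBundle m) n) :=
  fun n => {q | ∃ p : Plaque X (n + m), p ∈ D.plaques (n + m) ∧ InducedBy D p q}

/-- `DT` is a tangent smooth diffeological structure for `D` on `T^m X`: its plaques are
those generated by the plaques `p̃`, and on the generating plaques the relation `≈`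
is given by `p̃₁ ≈ⁿ p̃₂ ↔ p₁ ∼^{n+m} p₂`. -/
def IsTangentSDS {X : Type*} (D : SDS X) (m : ℕ) (DT : SDS (D.TangentBundle m)) : Prop :=
  DT.plaques = generatedPlaques (tangentGen D m) ∧
  ∀ (n : ℕ), 1 ≤ n → ∀ (p₁ p₂ : Plaque X (n + m)),
    p₁ ∈ D.plaques (n + m) → p₂ ∈ D.plaques (n + m) →
    ∀ (q₁ q₂ : Plaque (D.TangentBundle m) n), InducedBy D p₁ q₁ → InducedBy D p₂ q₂ →
    q₁.toFun 0 = q₂.toFun 0 →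
    (DT.rel n (q₁.toFun 0) q₁ q₂ ↔ D.rel (n + m) (p₁.toFun 0) p₁ p₂)

/-- The differential `D^m f : T^m X → T^m Y` of a smooth map, `[α]_F ↦ [f ∘ α]_{f F}`. -/
noncomputable def Dmap {X Y : Type*} (DX : SDS X) (DY : SDS Y) (f : X → Y)
    (hf : IsSmooth DX DY f) (m : ℕ) (hm : 1 ≤ m) :
    DX.TangentBundle m → DY.TangentBundle m := fun v =>
  ⟨f v.1, Quot.lift
    (fun a : DX.PlaqueAt m v.1 =>
      (Quot.mk _ (⟨a.1.map f, hf.1 m a.1 a.2.1, by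
        show f (a.1.toFun 0) = f v.1
        rw [a.2.2]⟩ : DY.PlaqueAt m (f v.1)) : DY.Tangent m (f v.1)))
    (fun a b h => Quot.sound (hf.2 m hm v.1 a.1 b.1 h)) v.2⟩

/-! Near the origin every plaque of the tangent diffeology restricts to a generating plaque `p̃`,
and `D^m f` sends `p̃` to `(f ∘ p)~`. Hence `D^m f` maps plaques to plaques because `f` does, and
since restricting near `0` does not change `≈`-classes while on generating plaques `≈` is
`∼^{n+m}`, the relation is preserved because `f` preserves `∼^{n+m}`. -/

@[ext]
lemma Plaque.ext {X : Type*} {n : ℕ} {p q : Plaque X n} (hdom : p.dom = q.dom)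
    (htoFun : p.toFun = q.toFun) : p = q := by
  cases p; cases q; cases hdom; cases htoFun; rfl

lemma SDS.mkTangent_congr {X : Type*} (D : SDS X) {n : ℕ} {p q : Plaque X n} (h : p = q)
    (hp : p ∈ D.plaques n) (hq : q ∈ D.plaques n) :
    D.mkTangent p hp rfl = D.mkTangent q hq rfl := by
  subst h; rfl

lemma SDS.rel_restrict_iff {X : Type*} (D : SDS X) {n : ℕ} {F : X} {p₁ p₂ : Plaque X n}
    (hn : 1 ≤ n) (hp₁ : p₁ ∈ D.plaques n) (h₁ : p₁.toFun 0 = F)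
    (hp₂ : p₂ ∈ D.plaques n) (h₂ : p₂.toFun 0 = F)
    {W₁ W₂ : Set (Fin n → ℝ)} (hW₁ : IsOpen W₁) (h0₁ : (0 : Fin n → ℝ) ∈ W₁)
    (hsub₁ : W₁ ⊆ p₁.dom) (hW₂ : IsOpen W₂) (h0₂ : (0 : Fin n → ℝ) ∈ W₂)
    (hsub₂ : W₂ ⊆ p₂.dom) :
    D.rel n F (p₁.restrict W₁ hW₁ h0₁) (p₂.restrict W₂ hW₂ h0₂) ↔ D.rel n F p₁ p₂ := by
  have e₁ := D.rel_restrict p₁ hn hp₁ h₁ W₁ hW₁ h0₁ hsub₁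
  have e₂ := D.rel_restrict p₂ hn hp₂ h₂ W₂ hW₂ h0₂ hsub₂
  constructor
  · intro h
    exact D.rel_trans hn e₁ (D.rel_trans hn h (D.rel_symm hn e₂))
  · intro h
    exact D.rel_trans hn (D.rel_symm hn e₁) (D.rel_trans hn h e₂)

lemma ContDiffOn.finAppend {E : Type*} [NormedAddCommGroup E] [NormedSpace ℝ E]
    {k : WithTop ℕ∞} {n m : ℕ} {s : Set E} {a : E → Fin n → ℝ} {b : E → Fin m → ℝ}
    (ha : ContDiffOn ℝ k a s) (hb : ContDiffOn ℝ k b s) :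
    ContDiffOn ℝ k (fun x => Fin.append (a x) (b x)) s := by
  refine contDiffOn_pi.2 fun i => Fin.addCases (fun j => ?_) (fun j => ?_) i
  · simpa only [Fin.append_left] using contDiffOn_pi.1 ha j
  · simpa only [Fin.append_right] using contDiffOn_pi.1 hb j

lemma contDiff_comp_castAdd {n m : ℕ} :
    ContDiff ℝ (⊤ : ℕ∞) (fun v : Fin (n + m) → ℝ => v ∘ Fin.castAdd m) :=
  contDiff_pi.2 fun i => contDiff_apply ℝ ℝ (Fin.castAdd m i)

lemma contDiff_comp_natAdd {n m : ℕ} :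
    ContDiff ℝ (⊤ : ℕ∞) (fun v : Fin (n + m) → ℝ => v ∘ Fin.natAdd n) :=
  contDiff_pi.2 fun j => contDiff_apply ℝ ℝ (Fin.natAdd n j)

/-- `p̃ ∘ φ` is induced by `p ∘ (φ × id)`. -/
lemma mem_tangentGen_of_eqOn_comp {X : Type*} (D : SDS X) {m n k : ℕ}
    {g : Plaque (D.TangentBundle m) k} (hg : g ∈ tangentGen D m k)
    {q : Plaque (D.TangentBundle m) n} {φ : (Fin n → ℝ) → (Fin k → ℝ)}
    (hφ : ContDiffOn ℝ (⊤ : ℕ∞) φ q.dom) (hφg : ∀ r ∈ q.dom, φ r ∈ g.dom)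
    (hq : ∀ r ∈ q.dom, q.toFun r = g.toFun (φ r)) : q ∈ tangentGen D m n := by
  obtain ⟨p, hp, hgdom, hgval⟩ := hg
  set Ψ : (Fin (n + m) → ℝ) → (Fin (k + m) → ℝ) :=
    fun v => Fin.append (φ (v ∘ Fin.castAdd m)) (v ∘ Fin.natAdd n)
  have hΨ : ∀ r s, Ψ (Fin.append r s) = Fin.append (φ r) s := by
    intro r s
    simp [Ψ, Function.comp_def]
  set U : Set (Fin (n + m) → ℝ) := {v | v ∘ Fin.castAdd m ∈ q.dom} ∩ Ψ ⁻¹' p.dom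
  have hΨsmooth : ContDiffOn ℝ (⊤ : ℕ∞) Ψ {v | v ∘ Fin.castAdd m ∈ q.dom} :=
    (hφ.comp contDiff_comp_castAdd.contDiffOn fun _ hv => hv).finAppend
      contDiff_comp_natAdd.contDiffOn
  have hU : IsOpen U := hΨsmooth.continuousOn.isOpen_inter_preimage
    (q.isOpen.preimage contDiff_comp_castAdd.continuous) p.isOpen
  have hφp : ∀ r ∈ q.dom, Fin.append (φ r) (0 : Fin m → ℝ) ∈ p.dom := fun r hr => by
    have h := hφg r hr
    rwa [hgdom] at h
  have hmemU : ∀ r ∈ q.dom, ∀ s, Fin.append r s ∈ U ↔ Fin.append (φ r) s ∈ p.dom := by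
    intro r hr s
    simp [U, hΨ, Function.comp_def, hr]
  have h0U : (0 : Fin (n + m) → ℝ) ∈ U := ⟨q.zero_mem, hφp 0 q.zero_mem⟩
  refine ⟨p.comp Ψ U hU h0U,
    D.comp_mem p hp Ψ U hU h0U (hΨsmooth.mono Set.inter_subset_left) fun _ hv => hv.2, ?_, ?_⟩
  · ext r
    refine ⟨fun hr => (hmemU r hr 0).2 (hφp r hr), fun hr => ?_⟩
    simpa [Function.comp_def] using hr.1
  · intro r hr
    obtain ⟨hφr, hslice, hgr⟩ := hgval (φ r) (hφg r hr)
    have hslice_eq :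
        p.slice (φ r) hφr = (p.comp Ψ U hU h0U).slice r ((hmemU r hr 0).2 hφr) := by
      ext s
      · exact (hmemU r hr s).symm
      · simp only [Plaque.slice, Plaque.comp, hΨ]
    refine ⟨(hmemU r hr 0).2 hφr, hslice_eq ▸ hslice, ?_⟩
    rw [hq r hr, hgr]
    exact D.mkTangent_congr hslice_eq _ _

lemma exists_restrict_mem_tangentGen {X : Type*} (D : SDS X) {m n : ℕ}
    {q : Plaque (D.TangentBundle m) n} (hq : q ∈ generatedPlaques (tangentGen D m) n) :
    ∃ (W : Set (Fin n → ℝ)) (hW : IsOpen W) (h0 : (0 : Fin n → ℝ) ∈ W),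
      W ⊆ q.dom ∧ q.restrict W hW h0 ∈ tangentGen D m n := by
  obtain ⟨W, hW, h0, hWq, k, g, hg, φ, hφ, hφg, hqg⟩ := hq 0 q.zero_mem
  exact ⟨W, hW, h0, hWq, mem_tangentGen_of_eqOn_comp D hg hφ hφg hqg⟩

lemma map_mem_generatedPlaques {X Y : Type*} {S : ∀ n : ℕ, Set (Plaque X n)}
    {S' : ∀ n : ℕ, Set (Plaque Y n)} {g : X → Y} (hS : ∀ k, ∀ p ∈ S k, p.map g ∈ S' k)
    {n : ℕ} {q : Plaque X n} (hq : q ∈ generatedPlaques S n) :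
    q.map g ∈ generatedPlaques S' n := by
  intro r hr
  obtain ⟨W, hW, hrW, hWq, k, p, hp, φ, hφ, hφp, hqp⟩ := hq r hr
  exact ⟨W, hW, hrW, hWq, k, p.map g, hS k p hp, φ, hφ, hφp,
    fun s hs => congrArg g (hqp s hs)⟩

section Dmap

variable {X Y : Type*} {DX : SDS X} {DY : SDS Y} {f : X → Y} (hf : IsSmooth DX DY f)
  {m : ℕ} (hm : 1 ≤ m)

lemma InducedBy.map {n : ℕ} {p : Plaque X (n + m)} {q : Plaque (DX.TangentBundle m) n}
    (h : InducedBy DX p q) : InducedBy DY (p.map f) (q.map (Dmap DX DY f hf m hm)) := by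
  refine ⟨h.1, fun r hr => ?_⟩
  obtain ⟨hr', hslice, hqr⟩ := h.2 r hr
  exact ⟨hr', hf.1 m _ hslice, congrArg (Dmap DX DY f hf m hm) hqr⟩

lemma map_mem_tangentGen {n : ℕ} {q : Plaque (DX.TangentBundle m) n}
    (hq : q ∈ tangentGen DX m n) : q.map (Dmap DX DY f hf m hm) ∈ tangentGen DY m n := by
  obtain ⟨p, hp, hpq⟩ := hq
  exact ⟨p.map f, hf.1 _ p hp, hpq.map hf hm⟩

end Dmap

/-- Proposition 2.2: if `f : X → Y` is a smooth map of smooth diffeological spaces,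
then `D^m f : T^m X → T^m Y` is a smooth map between the tangent smooth
diffeological spaces. -/
theorem Dmap_isSmooth {X Y : Type*} (DX : SDS X) (DY : SDS Y) (f : X → Y)
    (hf : IsSmooth DX DY f) (m : ℕ) (hm : 1 ≤ m)
    (DTX : SDS (DX.TangentBundle m)) (hDTX : IsTangentSDS DX m DTX)
    (DTY : SDS (DY.TangentBundle m)) (hDTY : IsTangentSDS DY m DTY) :
    IsSmooth DTX DTY (Dmap DX DY f hf m hm) := by
  obtain ⟨hPX, hRX⟩ := hDTX
  obtain ⟨hPY, hRY⟩ := hDTY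
  have hdiff : ∀ n, ∀ q ∈ DTX.plaques n, q.map (Dmap DX DY f hf m hm) ∈ DTY.plaques n := by
    intro n q hq
    rw [hPX] at hq
    rw [hPY]
    exact map_mem_generatedPlaques (fun _ _ => map_mem_tangentGen hf hm) hq
  refine ⟨hdiff, fun n hn F q₁ q₂ hrel => ?_⟩
  obtain ⟨⟨hq₁, rfl⟩, hq₂, h₂⟩ := DTX.mem_of_rel hn hrel
  obtain ⟨W₁, hW₁, h0₁, hsub₁, p₁, hp₁, hind₁⟩ :=
    exists_restrict_mem_tangentGen DX (hPX ▸ hq₁)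
  obtain ⟨W₂, hW₂, h0₂, hsub₂, p₂, hp₂, hind₂⟩ :=
    exists_restrict_mem_tangentGen DX (hPX ▸ hq₂)
  have hrelX : DX.rel (n + m) (p₁.toFun 0) p₁ p₂ :=
    (hRX n hn p₁ p₂ hp₁ hp₂ _ _ hind₁ hind₂ h₂.symm).1
      ((DTX.rel_restrict_iff hn hq₁ rfl hq₂ h₂ hW₁ h0₁ hsub₁ hW₂ h0₂ hsub₂).2 hrel)
  have hrelY := (hRY n hn _ _ (hf.1 _ _ hp₁) (hf.1 _ _ hp₂) _ _ (hind₁.map hf hm)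
    (hind₂.map hf hm) (congrArg (Dmap DX DY f hf m hm) h₂.symm)).2
    (hf.2 _ (by omega) _ _ _ hrelX)
  exact (DTY.rel_restrict_iff hn (hdiff n q₁ hq₁) rfl (hdiff n q₂ hq₂)
    (congrArg (Dmap DX DY f hf m hm) h₂) hW₁ h0₁ hsub₁ hW₂ h0₂ hsub₂).1 hrelY
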